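/- (Interpolation transfer for equilibrium logic, CW version) Let α, β be formulas over a finite vocabulary, V' = V(β) ∖ V(α) = {B₁,…,Bₙ}. If α has an equilibrium model over V(α) ∪ V(β) and β is true in all such equilibrium models (α |~_cw β), then, assuming the interpolation theorem for HT, there exists a formula γ with V(γ) ⊆ V(α) ∩ V(β) such that every equilibrium model of α satisfies γ, and γ ∧ ¬B₁ ∧ … ∧ ¬Bₙ ⊨_HT β. -/

import Mathlib

/-- Propositional formulas over atoms ℕ. -/
inductive Fm where
  | atom : ℕ → Fm
  | bot  : Fm
  | and  : Fm → Fm → Fm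
  | or   : Fm → Fm → Fm
  | imp  : Fm → Fm → Fm
deriving DecidableEq

def Fm.neg (φ : Fm) : Fm := Fm.imp φ Fm.bot
def Fm.top : Fm := Fm.imp Fm.bot Fm.bot

/-- Truth at the "there" world (classical truth in T). -/
def satT (T : Set ℕ) : Fm → Prop
  | .atom a  => a ∈ T
  | .bot     => False
  | .and φ ψ => satT T φ ∧ satT T ψ
  | .or φ ψ  => satT T φ ∨ satT T ψ
  | .imp φ ψ => satT T φ → satT T ψ

/-- Truth at the "here" world of the HT-interpretation ⟨H,T⟩. -/
def satH (H T : Set ℕ) : Fm → Prop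
  | .atom a  => a ∈ H
  | .bot     => False
  | .and φ ψ => satH H T φ ∧ satH H T ψ
  | .or φ ψ  => satH H T φ ∨ satH H T ψ
  | .imp φ ψ => (satH H T φ → satH H T ψ) ∧ (satT T φ → satT T ψ)

/-- ⟨H,T⟩ is an HT-model of φ (true at both worlds). -/
def htSat (H T : Set ℕ) (φ : Fm) : Prop := satH H T φ ∧ satT T φ

/-- ⟨H,T⟩ is an HT-model of the theory Γ. -/
def htSatTh (H T : Set ℕ) (Γ : Set Fm) : Prop := ∀ φ ∈ Γ, htSat H T φ

/-- Atoms occurring in a formula. -/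
def vars : Fm → Finset ℕ
  | .atom a  => {a}
  | .bot     => ∅
  | .and φ ψ => vars φ ∪ vars ψ
  | .or φ ψ  => vars φ ∪ vars ψ
  | .imp φ ψ => vars φ ∪ vars ψ

/-- Atoms occurring in a theory. -/
def varsTh (Γ : Set Fm) : Set ℕ := ⋃ φ ∈ Γ, (vars φ : Set ℕ)

/-- HT-consequence: every world of every HT-interpretation making all of Γ true makes φ true. -/
def htConseqTh (Γ : Set Fm) (φ : Fm) : Prop :=
  ∀ H T : Set ℕ, H ⊆ T →
    ((∀ ψ ∈ Γ, satH H T ψ) → satH H T φ) ∧ ((∀ ψ ∈ Γ, satT T ψ) → satT T φ)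

/-- ⟨T,T⟩ is an equilibrium model of Γ over vocabulary V. -/
def eqModel (V : Set ℕ) (Γ : Set Fm) (T : Set ℕ) : Prop :=
  T ⊆ V ∧ htSatTh T T Γ ∧ ∀ H : Set ℕ, H ⊆ T → H ≠ T → ¬ htSatTh H T Γ

def bigAnd (l : List Fm) : Fm := l.foldr Fm.and Fm.top
def bigOr (l : List Fm) : Fm := l.foldr Fm.or Fm.bot
noncomputable def conjAtoms (s : Finset ℕ) : Fm := bigAnd (s.toList.map Fm.atom)
noncomputable def disjAtoms (s : Finset ℕ) : Fm := bigOr (s.toList.map Fm.atom)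
/-- δ_T over vocabulary V : (⋀_{a∈T} a) ∧ ¬(⋁_{a∈V∖T} a). -/
noncomputable def delta (V T : Finset ℕ) : Fm := Fm.and (conjAtoms T) (Fm.neg (disjAtoms (V \ T)))

/-!
`α` has finitely many equilibrium models, all inside `V(α)`, so the disjunction
`γ := ⋁_S δ_{S ∩ V}` of their state descriptions on `V = V(α) ∩ V(β)` is a formula. Each
equilibrium model satisfies its own disjunct. Conversely, in an HT-model of `γ ∧ ¬B₁ ∧ … ∧ ¬Bₙ`
a disjunct `δ_{S ∩ V}` fixes both worlds to `S` on `V`, and the `¬Bᵢ` make both empty on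
`V(β) ∖ V(α)`, where `S` is empty as well; so both worlds agree with `S` on `V(β)`, and `β` holds
because it holds in the equilibrium model `⟨S, S⟩`.
-/

section Semantics

variable {H T H₁ T₁ H₂ T₂ : Set ℕ}

lemma satT_congr (φ : Fm) (h : ∀ a ∈ vars φ, a ∈ T₁ ↔ a ∈ T₂) : satT T₁ φ ↔ satT T₂ φ := by
  induction φ <;> simp_all [satT, vars]

lemma satH_congr (φ : Fm) (hH : ∀ a ∈ vars φ, a ∈ H₁ ↔ a ∈ H₂)
    (hT : ∀ a ∈ vars φ, a ∈ T₁ ↔ a ∈ T₂) : satH H₁ T₁ φ ↔ satH H₂ T₂ φ := by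
  induction φ with
  | imp φ ψ ihφ ihψ =>
    simp only [vars, Finset.mem_union] at hH hT
    simp only [satH]
    rw [ihφ (fun a ha => hH a (.inl ha)) (fun a ha => hT a (.inl ha)),
      ihψ (fun a ha => hH a (.inr ha)) (fun a ha => hT a (.inr ha)),
      satT_congr φ (fun a ha => hT a (.inl ha)), satT_congr ψ (fun a ha => hT a (.inr ha))]
  | _ => simp_all [satH, vars]

lemma satH_self (φ : Fm) : satH T T φ ↔ satT T φ := by
  induction φ <;> simp_all [satH, satT]

lemma satT_of_satH (hHT : H ⊆ T) {φ : Fm} (h : satH H T φ) : satT T φ := by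
  induction φ with
  | atom a => exact hHT h
  | bot => exact h
  | and φ ψ ihφ ihψ => exact ⟨ihφ h.1, ihψ h.2⟩
  | or φ ψ ihφ ihψ => exact h.imp ihφ ihψ
  | imp φ ψ _ _ => exact h.2

lemma satH_neg (hHT : H ⊆ T) (φ : Fm) : satH H T φ.neg ↔ ¬ satT T φ := by
  simp only [Fm.neg, satH, satT, imp_false, and_iff_right_iff_imp]
  exact fun hT hH => hT (satT_of_satH hHT hH)

lemma htSat_self_iff (φ : Fm) : htSat T T φ ↔ satT T φ := by
  rw [htSat, satH_self, and_self]

/-- The there-world half of HT-consequence is the here-world half at `H = T`. -/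
lemma htConseqTh_of_satH {Γ : Set Fm} {φ : Fm}
    (h : ∀ H T : Set ℕ, H ⊆ T → (∀ ψ ∈ Γ, satH H T ψ) → satH H T φ) : htConseqTh Γ φ := by
  refine fun H T hHT => ⟨h H T hHT, fun hΓ => ?_⟩
  rw [← satH_self]
  exact h T T subset_rfl fun ψ hψ => (satH_self ψ).2 (hΓ ψ hψ)

end Semantics

section BigConnectives

variable {H T : Set ℕ}

lemma satH_bigAnd {l : List Fm} : satH H T (bigAnd l) ↔ ∀ φ ∈ l, satH H T φ := by
  induction l with
  | nil => simp [bigAnd, satH, Fm.top]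
  | cons φ l ih => simp [bigAnd, satH, ← ih]

lemma satH_bigOr {l : List Fm} : satH H T (bigOr l) ↔ ∃ φ ∈ l, satH H T φ := by
  induction l with
  | nil => simp [bigOr, satH]
  | cons φ l ih => simp [bigOr, satH, ← ih]

lemma satT_bigOr {l : List Fm} : satT T (bigOr l) ↔ ∃ φ ∈ l, satT T φ := by
  induction l with
  | nil => simp [bigOr, satT]
  | cons φ l ih => simp [bigOr, satT, ← ih]

lemma vars_bigOr {l : List Fm} {s : Finset ℕ} (h : ∀ φ ∈ l, vars φ ⊆ s) :
    vars (bigOr l) ⊆ s := by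
  induction l with
  | nil => simp [bigOr, vars]
  | cons φ l ih => simp_all [bigOr, vars, Finset.union_subset_iff]

lemma vars_bigAnd {l : List Fm} {s : Finset ℕ} (h : ∀ φ ∈ l, vars φ ⊆ s) :
    vars (bigAnd l) ⊆ s := by
  induction l with
  | nil => simp [bigAnd, vars, Fm.top]
  | cons φ l ih => simp_all [bigAnd, vars, Finset.union_subset_iff]

lemma satH_bigAnd_neg_atoms (hHT : H ⊆ T) (s : Finset ℕ) :
    satH H T (bigAnd (s.toList.map fun a => Fm.neg (Fm.atom a))) ↔ ∀ a ∈ s, a ∉ T := by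
  simp [satH_bigAnd, satH_neg hHT, satT]

lemma satH_conjAtoms {s : Finset ℕ} : satH H T (conjAtoms s) ↔ ∀ a ∈ s, a ∈ H := by
  simp [conjAtoms, satH_bigAnd, satH]

lemma satT_disjAtoms {s : Finset ℕ} : satT T (disjAtoms s) ↔ ∃ a ∈ s, a ∈ T := by
  simp [disjAtoms, satT_bigOr, satT]

lemma vars_conjAtoms (s : Finset ℕ) : vars (conjAtoms s) ⊆ s :=
  vars_bigAnd fun φ hφ => by
    obtain ⟨a, ha, rfl⟩ := List.mem_map.1 hφ
    simpa [vars] using ha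

end BigConnectives

section Delta

variable {H T : Set ℕ} {V : Finset ℕ}

lemma vars_delta {R : Finset ℕ} (hR : R ⊆ V) : vars (delta V R) ⊆ V := by
  simp only [delta, Fm.neg, vars, Finset.union_subset_iff, Finset.empty_subset, and_true]
  exact ⟨(vars_conjAtoms R).trans hR, (vars_bigOr fun φ hφ => by
    obtain ⟨a, ha, rfl⟩ := List.mem_map.1 hφ
    simpa [vars] using (Finset.mem_sdiff.1 (Finset.mem_toList.1 ha)).1)⟩

lemma satH_delta (hHT : H ⊆ T) {R : Finset ℕ} (hR : R ⊆ V) :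
    satH H T (delta V R) ↔ ∀ a ∈ V, (a ∈ H ↔ a ∈ R) ∧ (a ∈ T ↔ a ∈ R) := by
  simp only [delta, satH, satH_conjAtoms, satH_neg hHT, satT_disjAtoms, Finset.mem_sdiff]
  constructor
  · rintro ⟨hRH, hout⟩ a haV
    by_cases haR : a ∈ R
    · exact ⟨iff_of_true (hRH a haR) haR, iff_of_true (hHT (hRH a haR)) haR⟩
    · have haT : a ∉ T := fun haT => hout ⟨a, ⟨haV, haR⟩, haT⟩
      exact ⟨iff_of_false (fun haH => haT (hHT haH)) haR, iff_of_false haT haR⟩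
  · intro h
    exact ⟨fun a haR => (h a (hR haR)).1.2 haR,
      fun ⟨a, ⟨haV, haR⟩, haT⟩ => haR ((h a haV).2.1 haT)⟩

noncomputable def disjDelta (V : Finset ℕ) (𝒮 : Finset (Finset ℕ)) : Fm :=
  bigOr (𝒮.toList.map fun S => delta V (S ∩ V))

lemma vars_disjDelta (𝒮 : Finset (Finset ℕ)) : vars (disjDelta V 𝒮) ⊆ V :=
  vars_bigOr fun φ hφ => by
    obtain ⟨S, -, rfl⟩ := List.mem_map.1 hφ
    exact vars_delta Finset.inter_subset_right

lemma satH_disjDelta (hHT : H ⊆ T) (𝒮 : Finset (Finset ℕ)) :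
    satH H T (disjDelta V 𝒮) ↔ ∃ S ∈ 𝒮, ∀ a ∈ V, (a ∈ H ↔ a ∈ S) ∧ (a ∈ T ↔ a ∈ S) := by
  simp only [disjDelta, satH_bigOr, List.mem_map, Finset.mem_toList]
  constructor
  · rintro ⟨-, ⟨S, hS, rfl⟩, hδ⟩
    refine ⟨S, hS, fun a haV => ?_⟩
    simpa [haV] using (satH_delta hHT Finset.inter_subset_right).1 hδ a haV
  · rintro ⟨S, hS, hSV⟩
    refine ⟨_, ⟨S, hS, rfl⟩, (satH_delta hHT Finset.inter_subset_right).2 fun a haV => ?_⟩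
    simpa [haV] using hSV a haV

end Delta

section EquilibriumModels

variable {V : Set ℕ}

lemma eqModel_subset_varsTh {Γ : Set Fm} {T : Set ℕ} (h : eqModel V Γ T) : T ⊆ varsTh Γ := by
  intro a haT
  by_contra ha
  have hne : T \ {a} ≠ T := fun hT => by rw [← hT] at haT; exact haT.2 rfl
  refine h.2.2 (T \ {a}) Set.sdiff_subset hne fun φ hφ => ?_
  have hφa : a ∉ vars φ := fun haφ => ha (Set.mem_biUnion hφ haφ)
  refine ⟨(satH_congr φ (fun b hb => ?_) fun _ _ => Iff.rfl).2 (h.2.1 φ hφ).1, (h.2.1 φ hφ).2⟩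
  simp only [Set.mem_sdiff, Set.mem_singleton_iff, and_iff_left_iff_imp]
  exact fun _ hba => hφa (hba ▸ hb)

open Classical in
/-- Equilibrium models of `α` lie inside `vars α` by `eqModel_subset_varsTh`: this lists them all. -/
noncomputable def eqModelFinset (V : Set ℕ) (α : Fm) : Finset (Finset ℕ) :=
  (vars α).powerset.filter fun S => eqModel V {α} S

lemma mem_eqModelFinset {α : Fm} {S : Finset ℕ} :
    S ∈ eqModelFinset V α ↔ S ⊆ vars α ∧ eqModel V {α} S := by
  simp [eqModelFinset]

lemma exists_mem_eqModelFinset {α : Fm} {T : Set ℕ} (h : eqModel V {α} T) :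
    ∃ S ∈ eqModelFinset V α, (S : Set ℕ) = T := by
  classical
  have hT : T ⊆ vars α := by simpa [varsTh] using eqModel_subset_varsTh h
  have hcoe : ((vars α).filter (· ∈ T) : Set ℕ) = T := by
    ext a
    simpa using fun haT => hT haT
  exact ⟨_, mem_eqModelFinset.2 ⟨Finset.filter_subset _ _, hcoe.symm ▸ h⟩, hcoe⟩

end EquilibriumModels

theorem cw_interpolation_general (α β : Fm)
    (hcw : ∀ T : Set ℕ, eqModel ((vars α ∪ vars β : Finset ℕ) : Set ℕ) {α} T → htSat T T β) :
    ∃ γ : Fm, vars γ ⊆ vars α ∩ vars β ∧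
      (∀ T : Set ℕ, eqModel ((vars α ∪ vars β : Finset ℕ) : Set ℕ) {α} T → htSat T T γ) ∧
      htConseqTh
        {Fm.and γ (bigAnd (((vars β \ vars α : Finset ℕ)).toList.map
          (fun a => Fm.neg (Fm.atom a))))} β := by
  set 𝒮 := eqModelFinset ((vars α ∪ vars β : Finset ℕ) : Set ℕ) α
  refine ⟨disjDelta (vars α ∩ vars β) 𝒮, vars_disjDelta 𝒮, fun T hT => ?_,
    htConseqTh_of_satH fun H T hHT hΓ => ?_⟩
  · obtain ⟨S, hS, rfl⟩ := exists_mem_eqModelFinset hT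
    rw [htSat_self_iff, ← satH_self, satH_disjDelta subset_rfl]
    exact ⟨S, hS, fun _ _ => ⟨Iff.rfl, Iff.rfl⟩⟩
  · obtain ⟨hγ, hnew⟩ := hΓ _ rfl
    obtain ⟨S, hS, hagreeV⟩ := (satH_disjDelta hHT 𝒮).1 hγ
    obtain ⟨hSα, hSeq⟩ := mem_eqModelFinset.1 hS
    have hnewT := (satH_bigAnd_neg_atoms hHT _).1 hnew
    have hagree : ∀ a ∈ vars β, (a ∈ H ↔ a ∈ S) ∧ (a ∈ T ↔ a ∈ S) := fun a haβ => by
      by_cases haα : a ∈ vars α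
      · exact hagreeV a (Finset.mem_inter.2 ⟨haα, haβ⟩)
      · have haT := hnewT a (Finset.mem_sdiff.2 ⟨haβ, haα⟩)
        exact ⟨iff_of_false (fun haH => haT (hHT haH)) (fun haS => haα (hSα haS)),
          iff_of_false haT (fun haS => haα (hSα haS))⟩
    exact (satH_congr β (fun a ha => (hagree a ha).1) fun a ha => (hagree a ha).2).2 (hcw S hSeq).1

/-- interpolation transfer for closed-world equilibrium entailment. -/
theorem cw_interpolation (α β : Fm)
    (hcoh : ∃ T : Set ℕ, eqModel ((vars α ∪ vars β : Finset ℕ) : Set ℕ) {α} T)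
    (hcw : ∀ T : Set ℕ, eqModel ((vars α ∪ vars β : Finset ℕ) : Set ℕ) {α} T → htSat T T β)
    (hinterp : ∀ φ ψ : Fm, htConseqTh {φ} ψ →
      ∃ ξ : Fm, vars ξ ⊆ vars φ ∩ vars ψ ∧ htConseqTh {φ} ξ ∧ htConseqTh {ξ} ψ) :
    ∃ γ : Fm, vars γ ⊆ vars α ∩ vars β ∧
      (∀ T : Set ℕ, eqModel ((vars α ∪ vars β : Finset ℕ) : Set ℕ) {α} T → htSat T T γ) ∧
      htConseqTh
        {Fm.and γ (bigAnd (((vars β \ vars α : Finset ℕ)).toList.map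
          (fun a => Fm.neg (Fm.atom a))))} β :=
  cw_interpolation_general α β hcw
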